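/- Let d be a well-defined derivation under the rollback recovery semantics (i.e., a derivation starting from a reachable system, in which commit(τ) and rollback(τ) are only called by the process that created checkpoint τ, every such call is preceded by a check returning τ, and for each checkpoint τ at most one of commit(τ) or rollback(τ) occurs) in which only the forward rules (Seq, Send, Receive, Spawn, Par, without checkpoint creation, commit or rollback) are applied. Then the projection sta(d), obtained by erasing histories from process configurations and erasing checkpoint-identifier sets and message tags from messages, is a derivation under the standard semantics. -/

import Mathlib

/-
  Formalization of "An Asynchronous Scheme for Rollback Recovery in
  Message-Passing Concurrent Programming Languages" (G. Vidal, SAC'24).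

  We model:
  * an abstract local language `Lang` (local transition relations for
    sequential steps, send, receive, spawn, check, commit, rollback);
  * the standard semantics `SStep` on systems of process configurations
    ⟨p,s⟩ and floating messages (p,p',v) (systems are multisets, which
    realizes the commutative/associative parallel composition, the Par
    rule being built in by including the rest of the system in each rule);
  * the rollback recovery semantics `RStepL` (labelled by the kind of rule
    applied) on systems of extended process configurations ⟨Δ,p,s⟩ (possibly
    blocked/annotated), extended tagged messages (C,p,p',{ℓ,v}) and system
    notifications ⟬p,p',v⟭;
  * the uncontrolled reversible semantics (`FwdStep`/`BwdStep`/`RevStep`)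
    and the controlled backward semantics `CBStep` on systems of
    configurations ⟪h,p,s⟫_φ (a plain configuration ⟨h,p,s⟩ is one with
    φ = ∅, which realizes the structural equivalence SC);
  * the projection `sta`, the normalizations ⌊·⌋ / ⌈·⌉ and the
    equivalence ≈ (`equivSys`), and `rolldel`.

  Local states are abstract (`State`), message values abstract (`Value`);
  pids, message tags and checkpoint identifiers are natural numbers.
  A ⊥ state is represented by `none : Option State`.
-/

namespace RB

/-- Rollback requests of the controlled backward semantics:
a checkpoint identifier τ, a message tag ℓ, or sp. -/
inductive Req : Type where
  | chk (τ : ℕ)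
  | tag (ℓ : ℕ)
  | sp
deriving DecidableEq

/-- Labels identifying which rule of the rollback recovery semantics is applied.
`check p τ`, `commit p τ` and `rollback p τ` record the pid of the process
performing the call and the checkpoint identifier; `commitN` covers the
notification-driven commit rules (Commit2, Delay2, Commit3) and `rollN`
the rollback-propagation rules (Roll1-Roll3, Undo-*, Resume1-4). -/
inductive RLabel : Type where
  | seq | send | recv | spawn
  | check (p τ : ℕ)
  | commit (p τ : ℕ)
  | rollback (p τ : ℕ)
  | commitN
  | rollN
deriving DecidableEq

/-- The abstract local (expression-level) semantics of the language. -/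
structure Lang (State Value : Type) where
  /-- s ─seq→ s' -/
  seqStep : State → State → Prop
  /-- s ─send(p',v)→ s' -/
  sendStep : State → ℕ → Value → State → Prop
  /-- s ─rec(κ,cs)→ s'' where matchrec(cs,v) = csᵢ and s'' = s'[κ←csᵢ] -/
  recvStep : State → Value → State → Prop
  /-- s ─spawn(κ,s₀)→ s'' where s'' = s'[κ←p'] for the fresh pid p' -/
  spawnStep : State → ℕ → State → State → Prop
  /-- s ─check(κ)→ s'' where s'' = s'[κ←τ] for the fresh checkpoint id τ -/
  checkStep : State → ℕ → State → Prop
  /-- s ─commit(τ)→ s' -/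
  commitStep : State → ℕ → State → Prop
  /-- s ─rollback(τ)→ s' -/
  rollbackStep : State → ℕ → State → Prop

/-! ## Standard semantics -/

/-- Components of a system of the standard semantics. -/
inductive SComp (State Value : Type) : Type where
  | proc (p : ℕ) (s : Option State)
  | msg (p p' : ℕ) (v : Value)

abbrev SSys (State Value : Type) := Multiset (SComp State Value)

/-- pid `x` occurs in the standard system `S` (function `id` of the paper). -/
def pidUsedS (State Value : Type) (x : ℕ) (S : SSys State Value) : Prop :=
  ∃ c ∈ S, match c with
    | SComp.proc p _ => x = p
    | SComp.msg p q _ => x = p ∨ x = q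

/-- The standard semantics (Figure 3).  The Par rule is built in:
every rule carries the rest of the system `R`. -/
inductive SStep (State Value : Type) (L : Lang State Value) :
    SSys State Value → SSys State Value → Prop where
  | seq : ∀ (p : ℕ) (s s' : State) (R : SSys State Value),
      L.seqStep s s' →
      SStep State Value L (SComp.proc p (some s) ::ₘ R) (SComp.proc p (some s') ::ₘ R)
  | send : ∀ (p p' : ℕ) (v : Value) (s s' : State) (R : SSys State Value),
      L.sendStep s p' v s' →
      SStep State Value L (SComp.proc p (some s) ::ₘ R)
        (SComp.msg p p' v ::ₘ SComp.proc p (some s') ::ₘ R)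
  | recv : ∀ (p q : ℕ) (v : Value) (s s' : State) (R : SSys State Value),
      L.recvStep s v s' →
      SStep State Value L (SComp.msg q p v ::ₘ SComp.proc p (some s) ::ₘ R)
        (SComp.proc p (some s') ::ₘ R)
  | spawn : ∀ (p p' : ℕ) (s s0 s' : State) (R : SSys State Value),
      L.spawnStep s p' s0 s' →
      ¬ pidUsedS State Value p' (SComp.proc p (some s) ::ₘ R) →
      SStep State Value L (SComp.proc p (some s) ::ₘ R)
        (SComp.proc p (some s') ::ₘ SComp.proc p' (some s0) ::ₘ R)

/-! ## Rollback recovery semantics -/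

/-- History items of the rollback recovery semantics:
`check τ s` (an active checkpoint with saved state `s`, `none` = ⊥),
`dcheck τ s` (a checkpoint whose commit has been delayed, written check̄(τ,s)),
`send q ℓ`, `rec C q ℓ v` (a message tagged ℓ with value v received from q,
carrying the set C of checkpoint ids of the sender) and `spawn q`. -/
inductive HItem (State Value : Type) : Type where
  | check (τ : ℕ) (s : Option State)
  | dcheck (τ : ℕ) (s : Option State)
  | send (q ℓ : ℕ)
  | recM (C : Finset ℕ) (q ℓ : ℕ) (v : Value)
  | spawn (q : ℕ)

abbrev Hist (State Value : Type) := List (HItem State Value)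

/-- Annotations of a process configuration: `noAnn` (normal forward mode),
`roll τ pτ pr Lc P` (blocked, rolling back to checkpoint τ, started by pτ,
requested by pr, with pending sent-message tags Lc and pending process
dependencies P) and `wait τ` (the form ⟨Δ,p,s⟩^τ used by Resume3/Resume4). -/
inductive RAnn : Type where
  | noAnn
  | roll (τ pτ pr : ℕ) (Lc P : Finset ℕ)
  | wait (τ : ℕ)

/-- Values of system notifications. -/
inductive NVal : Type where
  | roll (pτ τ : ℕ)
  | doneAsync (τ : ℕ)
  | doneSync (τ : ℕ)
  | resume (τ : ℕ)
  | commit (τ : ℕ)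

/-- Components of a system of the rollback recovery semantics:
(possibly annotated) extended process configurations ⟨Δ,p,s⟩,
extended messages (C,p,p',{ℓ,v}) and system notifications ⟬p,p',v⟭. -/
inductive RComp (State Value : Type) : Type where
  | proc (Δ : Hist State Value) (p : ℕ) (s : Option State) (a : RAnn)
  | msg (C : Finset ℕ) (p p' ℓ : ℕ) (v : Value)
  | notif (p p' : ℕ) (n : NVal)

abbrev RSys (State Value : Type) := Multiset (RComp State Value)

/-- The set of active checkpoints of a history (function chks). -/
def chks (State Value : Type) : Hist State Value → Finset ℕ
  | [] => ∅
  | HItem.check τ _ :: Δ' => insert τ (chks State Value Δ')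
  | _ :: Δ' => chks State Value Δ'

/-- Function add(a,Δ): record `a` only if there is some active checkpoint. -/
def addH (State Value : Type) (a : HItem State Value) (Δ : Hist State Value) :
    Hist State Value :=
  if chks State Value Δ = ∅ then Δ else a :: Δ

/-- τ ∈ Δ : the history contains a checkpoint (active or delayed) named τ. -/
def hasChk (State Value : Type) (τ : ℕ) (Δ : Hist State Value) : Prop :=
  ∃ it ∈ Δ, match it with
    | HItem.check τ' _ => τ' = τ
    | HItem.dcheck τ' _ => τ' = τ
    | _ => False

/-- τ' ≤_Δ τ : the ongoing rollback (to τ') is at least as old as the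
requested one (to τ): since Δ has already been truncated past check τ',
this amounts to the requested checkpoint τ having been unwound already. -/
def olderEq (State Value : Type) (Δ : Hist State Value) (_τ' τ : ℕ) : Prop :=
  ¬ hasChk State Value τ Δ

/-- Result of function chk(τ,Δ): the truncated history, the saved state,
the tags L of the messages sent, the pids P of the spawned processes and
message recipients, and the received messages Ms (all since the checkpoint). -/
structure ChkRes (State Value : Type) : Type where
  hist : Hist State Value
  st : Option State
  L : Finset ℕ
  P : Finset ℕ
  Ms : RSys State Value

/-- Function chk(τ,Δ) (Figure 8); `p` is the pid of the owner of the
history (needed to put received messages back on the network). -/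
def chkF (State Value : Type) (p τ : ℕ) : Hist State Value → Option (ChkRes State Value)
  | [] => none
  | HItem.check τ' s :: Δ' =>
      if τ' = τ then some ⟨Δ', s, ∅, ∅, 0⟩ else chkF State Value p τ Δ'
  | HItem.dcheck τ' s :: Δ' =>
      if τ' = τ then some ⟨Δ', s, ∅, ∅, 0⟩ else chkF State Value p τ Δ'
  | HItem.spawn q :: Δ' =>
      (chkF State Value p τ Δ').map fun r => { r with P := insert q r.P }
  | HItem.send q ℓ :: Δ' =>
      (chkF State Value p τ Δ').map fun r =>
        { r with L := insert ℓ r.L, P := insert q r.P }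
  | HItem.recM C q ℓ v :: Δ' =>
      (chkF State Value p τ Δ').map fun r =>
        { r with Ms := RComp.msg C q p ℓ v ::ₘ r.Ms }

/-- Function last(τ,Δ): τ is the most recent active checkpoint. -/
def lastA (State Value : Type) (τ : ℕ) : Hist State Value → Prop
  | [] => False
  | HItem.check τ' _ :: _ => τ' = τ
  | _ :: Δ' => lastA State Value τ Δ'

/-- Function del(τ,Δ): delete every element up to (and including) checkpoint τ. -/
def delH (State Value : Type) (τ : ℕ) : Hist State Value → Hist State Value
  | [] => []
  | HItem.check τ' s :: Δ' =>
      if τ' = τ then Δ' else delH State Value τ Δ'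
  | HItem.dcheck τ' s :: Δ' =>
      if τ' = τ then Δ' else delH State Value τ Δ'
  | _ :: Δ' => delH State Value τ Δ'

/-- Function delay(τ,Δ): mark checkpoint τ as delayed (check̄). -/
def delayH (State Value : Type) (τ : ℕ) : Hist State Value → Hist State Value
  | [] => []
  | HItem.check τ' s :: Δ' =>
      if τ' = τ then HItem.dcheck τ' s :: Δ' else HItem.check τ' s :: delayH State Value τ Δ'
  | a :: Δ' => a :: delayH State Value τ Δ'

/-- The topmost checkpoint of a history together with a flag telling
whether it is delayed (used for rule Commit3: `τ ∈ delayed(Δ) ∧ last(τ)`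
amounts to `topChk Δ = some (true, τ)`). -/
def topChk (State Value : Type) : Hist State Value → Option (Bool × ℕ)
  | [] => none
  | HItem.check τ _ :: _ => some (false, τ)
  | HItem.dcheck τ _ :: _ => some (true, τ)
  | _ :: Δ' => topChk State Value Δ'

/-- pid `x` occurs in the rollback-recovery system `S`. -/
def pidUsedR (State Value : Type) (x : ℕ) (S : RSys State Value) : Prop :=
  ∃ c ∈ S, match c with
    | RComp.proc Δ p _ _ =>
        x = p ∨ ∃ it ∈ Δ, (match it with
          | HItem.send q _ => x = q
          | HItem.recM _ q _ _ => x = q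
          | HItem.spawn q => x = q
          | _ => False)
    | RComp.msg _ p q _ _ => x = p ∨ x = q
    | RComp.notif p q _ => x = p ∨ x = q

/-- message tag `ℓ` occurs in the rollback-recovery system `S`. -/
def tagUsedR (State Value : Type) (ℓ : ℕ) (S : RSys State Value) : Prop :=
  ∃ c ∈ S, match c with
    | RComp.proc Δ _ _ a =>
        (∃ it ∈ Δ, (match it with
          | HItem.send _ ℓ' => ℓ = ℓ'
          | HItem.recM _ _ ℓ' _ => ℓ = ℓ'
          | _ => False)) ∨
        (match a with
          | RAnn.roll _ _ _ Lc _ => ℓ ∈ Lc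
          | _ => False)
    | RComp.msg _ _ _ ℓ' _ => ℓ = ℓ'
    | RComp.notif _ _ _ => False

/-- checkpoint identifier `τ` occurs in the rollback-recovery system `S`. -/
def chkUsedR (State Value : Type) (τ : ℕ) (S : RSys State Value) : Prop :=
  ∃ c ∈ S, match c with
    | RComp.proc Δ _ _ a =>
        (∃ it ∈ Δ, (match it with
          | HItem.check τ' _ => τ = τ'
          | HItem.dcheck τ' _ => τ = τ'
          | HItem.recM C _ _ _ => τ ∈ C
          | _ => False)) ∨
        (match a with
          | RAnn.roll τ' _ _ _ _ => τ = τ'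
          | RAnn.wait τ' => τ = τ'
          | RAnn.noAnn => False)
    | RComp.msg C _ _ _ _ => τ ∈ C
    | RComp.notif _ _ n =>
        (match n with
          | NVal.roll _ τ' => τ = τ'
          | NVal.doneAsync τ' => τ = τ'
          | NVal.doneSync τ' => τ = τ'
          | NVal.resume τ' => τ = τ'
          | NVal.commit τ' => τ = τ')

/-- The rollback recovery semantics (Figures 5-7, 9 and 10), labelled by
the kind of rule applied.  The Par rule is built in (rest `R`).
For rollback we take s' ⊕ s_τ = s_τ, as in the paper's soundness section. -/
inductive RStepL (State Value : Type) (L : Lang State Value) :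
    RLabel → RSys State Value → RSys State Value → Prop where
  /- forward rules (Figure 6) -/
  | seq : ∀ (Δ : Hist State Value) (p : ℕ) (s s' : State) (R : RSys State Value),
      L.seqStep s s' →
      RStepL State Value L RLabel.seq
        (RComp.proc Δ p (some s) RAnn.noAnn ::ₘ R)
        (RComp.proc Δ p (some s') RAnn.noAnn ::ₘ R)
  | send : ∀ (Δ : Hist State Value) (p p' ℓ : ℕ) (v : Value) (s s' : State)
      (R : RSys State Value),
      L.sendStep s p' v s' →
      ¬ tagUsedR State Value ℓ (RComp.proc Δ p (some s) RAnn.noAnn ::ₘ R) →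
      RStepL State Value L RLabel.send
        (RComp.proc Δ p (some s) RAnn.noAnn ::ₘ R)
        (RComp.msg (chks State Value Δ) p p' ℓ v ::ₘ
          RComp.proc (addH State Value (HItem.send p' ℓ) Δ) p (some s') RAnn.noAnn ::ₘ R)
  | recv : ∀ (Δ : Hist State Value) (C' : Finset ℕ) (p q ℓ : ℕ) (v : Value)
      (s s' : State) (R : RSys State Value),
      L.recvStep s v s' →
      RStepL State Value L RLabel.recv
        (RComp.msg C' q p ℓ v ::ₘ RComp.proc Δ p (some s) RAnn.noAnn ::ₘ R)
        (RComp.proc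
          (addH State Value (HItem.recM C' q ℓ v)
            (((C' \ chks State Value Δ).toList.map fun τ => HItem.check τ (some s)) ++ Δ))
          p (some s') RAnn.noAnn ::ₘ R)
  | spawn : ∀ (Δ : Hist State Value) (p p' : ℕ) (s s0 s' : State) (R : RSys State Value),
      L.spawnStep s p' s0 s' →
      ¬ pidUsedR State Value p' (RComp.proc Δ p (some s) RAnn.noAnn ::ₘ R) →
      RStepL State Value L RLabel.spawn
        (RComp.proc Δ p (some s) RAnn.noAnn ::ₘ R)
        (RComp.proc (addH State Value (HItem.spawn p') Δ) p (some s') RAnn.noAnn ::ₘ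
          RComp.proc ((chks State Value Δ).toList.map fun τ => HItem.check τ (none : Option State))
            p' (some s0) RAnn.noAnn ::ₘ R)
  /- rule Check (Figure 5) -/
  | check : ∀ (Δ : Hist State Value) (p τ : ℕ) (s s' : State) (R : RSys State Value),
      L.checkStep s τ s' →
      ¬ chkUsedR State Value τ (RComp.proc Δ p (some s) RAnn.noAnn ::ₘ R) →
      RStepL State Value L (RLabel.check p τ)
        (RComp.proc Δ p (some s) RAnn.noAnn ::ₘ R)
        (RComp.proc (HItem.check τ (some s) :: Δ) p (some s') RAnn.noAnn ::ₘ R)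
  /- commit rules (Figure 10) -/
  | commit : ∀ (Δ Δ'' : Hist State Value) (p τ : ℕ) (s s' : State) (sτ : Option State)
      (Lc P : Finset ℕ) (Ms R : RSys State Value),
      L.commitStep s τ s' →
      lastA State Value τ Δ →
      chkF State Value p τ Δ = some ⟨Δ'', sτ, Lc, P, Ms⟩ →
      RStepL State Value L (RLabel.commit p τ)
        (RComp.proc Δ p (some s) RAnn.noAnn ::ₘ R)
        (RComp.proc (delH State Value τ Δ) p (some s') RAnn.noAnn ::ₘ
          (P.val.map fun q => RComp.notif p q (NVal.commit τ)) + R)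
  | delay : ∀ (Δ : Hist State Value) (p τ : ℕ) (s s' : State) (R : RSys State Value),
      L.commitStep s τ s' →
      ¬ lastA State Value τ Δ →
      RStepL State Value L (RLabel.commit p τ)
        (RComp.proc Δ p (some s) RAnn.noAnn ::ₘ R)
        (RComp.proc (delayH State Value τ Δ) p (some s') RAnn.noAnn ::ₘ R)
  | commit2 : ∀ (Δ Δ'' : Hist State Value) (p q τ : ℕ) (s sτ : Option State)
      (Lc P : Finset ℕ) (Ms R : RSys State Value),
      lastA State Value τ Δ →
      chkF State Value p τ Δ = some ⟨Δ'', sτ, Lc, P, Ms⟩ →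
      RStepL State Value L RLabel.commitN
        (RComp.notif q p (NVal.commit τ) ::ₘ RComp.proc Δ p s RAnn.noAnn ::ₘ R)
        (RComp.proc (delH State Value τ Δ) p s RAnn.noAnn ::ₘ
          (P.val.map fun r => RComp.notif p r (NVal.commit τ)) + R)
  | delay2 : ∀ (Δ : Hist State Value) (p q τ : ℕ) (s : Option State) (R : RSys State Value),
      ¬ lastA State Value τ Δ →
      RStepL State Value L RLabel.commitN
        (RComp.notif q p (NVal.commit τ) ::ₘ RComp.proc Δ p s RAnn.noAnn ::ₘ R)
        (RComp.proc (delayH State Value τ Δ) p s RAnn.noAnn ::ₘ R)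
  | commit3 : ∀ (Δ Δ'' : Hist State Value) (p τ : ℕ) (s sτ : Option State)
      (Lc P : Finset ℕ) (Ms R : RSys State Value),
      topChk State Value Δ = some (true, τ) →
      chkF State Value p τ Δ = some ⟨Δ'', sτ, Lc, P, Ms⟩ →
      RStepL State Value L RLabel.commitN
        (RComp.proc Δ p s RAnn.noAnn ::ₘ R)
        (RComp.proc (delH State Value τ Δ) p s RAnn.noAnn ::ₘ
          (P.val.map fun r => RComp.notif p r (NVal.commit τ)) + R)
  /- rollback rules (Figure 9) -/
  | rollback : ∀ (Δ Δ' : Hist State Value) (p τ : ℕ) (s s' : State) (sτ : Option State)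
      (Lc P : Finset ℕ) (Ms R : RSys State Value),
      L.rollbackStep s τ s' →
      chkF State Value p τ Δ = some ⟨Δ', sτ, Lc, P, Ms⟩ →
      RStepL State Value L (RLabel.rollback p τ)
        (RComp.proc Δ p (some s) RAnn.noAnn ::ₘ R)
        (RComp.proc Δ' p sτ (RAnn.roll τ p p Lc P) ::ₘ
          (P.val.map fun q => RComp.notif p q (NVal.roll p τ)) + Ms + R)
  | roll1 : ∀ (Δ Δ' : Hist State Value) (p q pτ τ : ℕ) (s sτ : Option State)
      (Lc P : Finset ℕ) (Ms R : RSys State Value),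
      chkF State Value p τ Δ = some ⟨Δ', sτ, Lc, P, Ms⟩ →
      RStepL State Value L RLabel.rollN
        (RComp.notif q p (NVal.roll pτ τ) ::ₘ RComp.proc Δ p s RAnn.noAnn ::ₘ R)
        (RComp.proc Δ' p sτ (RAnn.roll τ pτ q Lc P) ::ₘ
          (P.val.map fun r => RComp.notif p r (NVal.roll pτ τ)) + Ms + R)
  | roll2 : ∀ (Δ : Hist State Value) (p q pτ τ : ℕ) (s : Option State) (R : RSys State Value),
      ¬ hasChk State Value τ Δ →
      RStepL State Value L RLabel.rollN
        (RComp.notif q p (NVal.roll pτ τ) ::ₘ RComp.proc Δ p s RAnn.noAnn ::ₘ R)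
        (RComp.proc Δ p s (RAnn.roll τ pτ q ∅ ∅) ::ₘ R)
  | roll3 : ∀ (Δ : Hist State Value) (p q pτ τ τ' p1 p2 : ℕ) (s : Option State)
      (Lc P : Finset ℕ) (R : RSys State Value),
      olderEq State Value Δ τ' τ →
      RStepL State Value L RLabel.rollN
        (RComp.notif q p (NVal.roll pτ τ) ::ₘ
          RComp.proc Δ p s (RAnn.roll τ' p1 p2 Lc P) ::ₘ R)
        (RComp.proc Δ p s (RAnn.roll τ' p1 p2 Lc P) ::ₘ
          RComp.notif p q (NVal.doneAsync τ) ::ₘ R)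
  | undoSend : ∀ (Δ : Hist State Value) (C : Finset ℕ) (p q q' ℓ τ pτ pr : ℕ)
      (v : Value) (s : Option State) (Lc P : Finset ℕ) (R : RSys State Value),
      ℓ ∈ Lc →
      RStepL State Value L RLabel.rollN
        (RComp.msg C q q' ℓ v ::ₘ RComp.proc Δ p s (RAnn.roll τ pτ pr Lc P) ::ₘ R)
        (RComp.proc Δ p s (RAnn.roll τ pτ pr (Lc.erase ℓ) P) ::ₘ R)
  | undoDep1 : ∀ (Δ : Hist State Value) (p q τ pτ pr : ℕ) (s : Option State)
      (P : Finset ℕ) (R : RSys State Value),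
      RStepL State Value L RLabel.rollN
        (RComp.notif q p (NVal.doneAsync τ) ::ₘ
          RComp.proc Δ p s (RAnn.roll τ pτ pr ∅ P) ::ₘ R)
        (RComp.proc Δ p s (RAnn.roll τ pτ pr ∅ (P.erase q)) ::ₘ R)
  | undoDep2 : ∀ (Δ : Hist State Value) (p q τ pτ pr : ℕ) (s : Option State)
      (P : Finset ℕ) (R : RSys State Value),
      RStepL State Value L RLabel.rollN
        (RComp.notif q p (NVal.doneSync τ) ::ₘ
          RComp.proc Δ p s (RAnn.roll τ pτ pr ∅ P) ::ₘ R)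
        (RComp.proc Δ p s (RAnn.roll τ pτ pr ∅ (P.erase q)) ::ₘ
          RComp.notif p q (NVal.resume τ) ::ₘ R)
  | resume1 : ∀ (Δ : Hist State Value) (p τ pr : ℕ) (s : Option State) (R : RSys State Value),
      RStepL State Value L RLabel.rollN
        (RComp.proc Δ p s (RAnn.roll τ p pr ∅ ∅) ::ₘ R)
        (RComp.proc Δ p s RAnn.noAnn ::ₘ R)
  | resume2 : ∀ (Δ : Hist State Value) (p τ pτ pr : ℕ) (R : RSys State Value),
      p ≠ pτ →
      RStepL State Value L RLabel.rollN
        (RComp.proc Δ p (none : Option State) (RAnn.roll τ pτ pr ∅ ∅) ::ₘ R)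
        (RComp.notif p pr (NVal.doneAsync τ) ::ₘ R)
  | resume3 : ∀ (Δ : Hist State Value) (p τ pτ pr : ℕ) (s : State) (R : RSys State Value),
      p ≠ pτ →
      RStepL State Value L RLabel.rollN
        (RComp.proc Δ p (some s) (RAnn.roll τ pτ pr ∅ ∅) ::ₘ R)
        (RComp.proc Δ p (some s) (RAnn.wait τ) ::ₘ
          RComp.notif p pr (NVal.doneSync τ) ::ₘ R)
  | resume4 : ∀ (Δ : Hist State Value) (p q τ : ℕ) (s : Option State) (R : RSys State Value),
      RStepL State Value L RLabel.rollN
        (RComp.notif q p (NVal.resume τ) ::ₘ RComp.proc Δ p s (RAnn.wait τ) ::ₘ R)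
        (RComp.proc Δ p s RAnn.noAnn ::ₘ R)

/-- One step of the rollback recovery semantics (any rule). -/
def RStep (State Value : Type) (L : Lang State Value)
    (S S' : RSys State Value) : Prop :=
  ∃ l, RStepL State Value L l S S'

/-- A system is reachable (under the rollback recovery semantics) if it is
derivable from an initial system ⟨[],p,s⟩ consisting of a single process
with an empty history. -/
def ReachableR (State Value : Type) (L : Lang State Value) (S : RSys State Value) : Prop :=
  ∃ p s, Relation.ReflTransGen (RStep State Value L)
    ({RComp.proc ([] : Hist State Value) p (some s) RAnn.noAnn} : RSys State Value) S

/-- The projection sta: erase histories/annotations from processes, erase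
checkpoint sets and tags from messages, and erase system notifications. -/
def staComp (State Value : Type) : RComp State Value → Option (SComp State Value)
  | RComp.proc _ p s _ => some (SComp.proc p s)
  | RComp.msg _ p q _ v => some (SComp.msg p q v)
  | RComp.notif _ _ _ => none

def staSys (State Value : Type) (S : RSys State Value) : SSys State Value :=
  Multiset.filterMap (staComp State Value) S

/-- A derivation under the rollback recovery semantics: a sequence of
`len` labelled steps. -/
structure Deriv (State Value : Type) (L : Lang State Value) : Type where
  len : ℕ
  sys : ℕ → RSys State Value
  lab : ℕ → RLabel
  step : ∀ i, i < len → RStepL State Value L (lab i) (sys i) (sys (i + 1))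

/-- `l` is a commit(τ) or rollback(τ) action performed by process p. -/
def isCR (l : RLabel) (p τ : ℕ) : Prop :=
  l = RLabel.commit p τ ∨ l = RLabel.rollback p τ

/-- Well-defined derivations: they start from a reachable system; commit(τ)
and rollback(τ) are only called by the process that created checkpoint τ,
and every such call is preceded by the corresponding call to check (either
within the derivation or before it); and for every checkpoint τ there is at
most one action, either commit(τ) or rollback(τ), but not both. -/
def WellDefined (State Value : Type) (L : Lang State Value)
    (d : Deriv State Value L) : Prop :=
  ReachableR State Value L (d.sys 0) ∧
  (∀ i, i < d.len → ∀ p τ, isCR (d.lab i) p τ →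
      (∃ j, j < i ∧ d.lab j = RLabel.check p τ) ∨
      (∃ Δ s a, RComp.proc Δ p s a ∈ d.sys 0 ∧ hasChk State Value τ Δ)) ∧
  (∀ i j, i < d.len → j < d.len → i ≠ j →
      ∀ p p' τ, isCR (d.lab i) p τ → isCR (d.lab j) p' τ → False)

/-- The forward rules of Figure 6 (Seq, Send, Receive, Spawn; Par built in). -/
def isCoreFwdLab (l : RLabel) : Prop :=
  l = RLabel.seq ∨ l = RLabel.send ∨ l = RLabel.recv ∨ l = RLabel.spawn

/-- A step using only the forward rules of Figure 6. -/
def RFwdStep (State Value : Type) (L : Lang State Value)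
    (S S' : RSys State Value) : Prop :=
  ∃ l, isCoreFwdLab l ∧ RStepL State Value L l S S'

/-- Forward labels (Seq, Send, Receive, Spawn, Check and the commit rules). -/
def isFwdLab : RLabel → Prop
  | RLabel.seq => True
  | RLabel.send => True
  | RLabel.recv => True
  | RLabel.spawn => True
  | RLabel.check _ _ => True
  | RLabel.commit _ _ => True
  | RLabel.commitN => True
  | _ => False

/-- Commit labels (rules Commit, Delay, Commit2, Delay2, Commit3). -/
def isCommitLab : RLabel → Prop
  | RLabel.commit _ _ => True
  | RLabel.commitN => True
  | _ => False

/-- Rollback labels (rules Rollback, Roll1-3, Undo-*, Resume1-4). -/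
def isRollLab : RLabel → Prop
  | RLabel.rollback _ _ => True
  | RLabel.rollN => True
  | _ => False

/-- A step using only the rollback rules of Figure 9. -/
def RollStep (State Value : Type) (L : Lang State Value)
    (S S' : RSys State Value) : Prop :=
  ∃ l, isRollLab l ∧ RStepL State Value L l S S'

/-- No ongoing rollback: every process of the system is in normal forward mode. -/
def noOngoing (State Value : Type) (S : RSys State Value) : Prop :=
  ∀ Δ p s a, RComp.proc Δ p s a ∈ S → a = RAnn.noAnn

/-! ## Reversible semantics (uncontrolled and controlled backward) -/

/-- History items of the reversible semantics: every item records the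
full state before the step. -/
inductive RvItem (State Value : Type) : Type where
  | seq (s : State)
  | send (s : State) (q ℓ : ℕ)
  | recM (s : State) (q ℓ : ℕ) (v : Value)
  | spawn (s : State) (q : ℕ)
  | check (τ : ℕ) (s : State)

/-- Components of the reversible semantics: ⟪h,p,s⟫_φ (a plain configuration
⟨h,p,s⟩ is one with φ = ∅, realizing the structural equivalence SC) and
tagged messages (p,p',{ℓ,v}). -/
inductive RvComp (State Value : Type) : Type where
  | proc (h : List (RvItem State Value)) (p : ℕ) (s : State) (φ : Finset Req)
  | msg (p q ℓ : ℕ) (v : Value)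

abbrev RvSys (State Value : Type) := Multiset (RvComp State Value)

def pidUsedRv (State Value : Type) (x : ℕ) (S : RvSys State Value) : Prop :=
  ∃ c ∈ S, match c with
    | RvComp.proc h p _ _ =>
        x = p ∨ ∃ it ∈ h, (match it with
          | RvItem.send _ q _ => x = q
          | RvItem.recM _ q _ _ => x = q
          | RvItem.spawn _ q => x = q
          | _ => False)
    | RvComp.msg p q _ _ => x = p ∨ x = q

def tagUsedRv (State Value : Type) (ℓ : ℕ) (S : RvSys State Value) : Prop :=
  ∃ c ∈ S, match c with
    | RvComp.proc h _ _ φ =>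
        (∃ it ∈ h, (match it with
          | RvItem.send _ _ ℓ' => ℓ = ℓ'
          | RvItem.recM _ _ ℓ' _ => ℓ = ℓ'
          | _ => False)) ∨ Req.tag ℓ ∈ φ
    | RvComp.msg _ _ ℓ' _ => ℓ = ℓ'

def chkUsedRv (State Value : Type) (τ : ℕ) (S : RvSys State Value) : Prop :=
  ∃ c ∈ S, match c with
    | RvComp.proc h _ _ φ =>
        (∃ it ∈ h, (match it with
          | RvItem.check τ' _ => τ = τ'
          | _ => False)) ∨ Req.chk τ ∈ φ
    | RvComp.msg _ _ _ _ => False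

/-- Forward rules of the uncontrolled reversible semantics (Figure 11). -/
inductive FwdStep (State Value : Type) (L : Lang State Value) :
    RvSys State Value → RvSys State Value → Prop where
  | seq : ∀ (h : List (RvItem State Value)) (p : ℕ) (s s' : State) (R : RvSys State Value),
      L.seqStep s s' →
      FwdStep State Value L
        (RvComp.proc h p s ∅ ::ₘ R)
        (RvComp.proc (RvItem.seq s :: h) p s' ∅ ::ₘ R)
  | send : ∀ (h : List (RvItem State Value)) (p q ℓ : ℕ) (v : Value) (s s' : State)
      (R : RvSys State Value),
      L.sendStep s q v s' →
      ¬ tagUsedRv State Value ℓ (RvComp.proc h p s ∅ ::ₘ R) →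
      FwdStep State Value L
        (RvComp.proc h p s ∅ ::ₘ R)
        (RvComp.msg p q ℓ v ::ₘ RvComp.proc (RvItem.send s q ℓ :: h) p s' ∅ ::ₘ R)
  | recv : ∀ (h : List (RvItem State Value)) (p q ℓ : ℕ) (v : Value) (s s' : State)
      (R : RvSys State Value),
      L.recvStep s v s' →
      FwdStep State Value L
        (RvComp.msg q p ℓ v ::ₘ RvComp.proc h p s ∅ ::ₘ R)
        (RvComp.proc (RvItem.recM s q ℓ v :: h) p s' ∅ ::ₘ R)
  | spawn : ∀ (h : List (RvItem State Value)) (p q : ℕ) (s s0 s' : State)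
      (R : RvSys State Value),
      L.spawnStep s q s0 s' →
      ¬ pidUsedRv State Value q (RvComp.proc h p s ∅ ::ₘ R) →
      FwdStep State Value L
        (RvComp.proc h p s ∅ ::ₘ R)
        (RvComp.proc (RvItem.spawn s q :: h) p s' ∅ ::ₘ
          RvComp.proc [] q s0 ∅ ::ₘ R)
  | check : ∀ (h : List (RvItem State Value)) (p τ : ℕ) (s s' : State)
      (R : RvSys State Value),
      L.checkStep s τ s' →
      ¬ chkUsedRv State Value τ (RvComp.proc h p s ∅ ::ₘ R) →
      FwdStep State Value L
        (RvComp.proc h p s ∅ ::ₘ R)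
        (RvComp.proc (RvItem.check τ s :: h) p s' ∅ ::ₘ R)

/-- Backward rules of the uncontrolled reversible semantics (Figure 12). -/
inductive BwdStep (State Value : Type) :
    RvSys State Value → RvSys State Value → Prop where
  | seq : ∀ (h : List (RvItem State Value)) (p : ℕ) (s s' : State) (R : RvSys State Value),
      BwdStep State Value
        (RvComp.proc (RvItem.seq s :: h) p s' ∅ ::ₘ R)
        (RvComp.proc h p s ∅ ::ₘ R)
  | send : ∀ (h : List (RvItem State Value)) (p q ℓ : ℕ) (v : Value) (s s' : State)
      (R : RvSys State Value),
      BwdStep State Value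
        (RvComp.msg p q ℓ v ::ₘ RvComp.proc (RvItem.send s q ℓ :: h) p s' ∅ ::ₘ R)
        (RvComp.proc h p s ∅ ::ₘ R)
  | recv : ∀ (h : List (RvItem State Value)) (p q ℓ : ℕ) (v : Value) (s s' : State)
      (R : RvSys State Value),
      BwdStep State Value
        (RvComp.proc (RvItem.recM s q ℓ v :: h) p s' ∅ ::ₘ R)
        (RvComp.msg q p ℓ v ::ₘ RvComp.proc h p s ∅ ::ₘ R)
  | spawn : ∀ (h : List (RvItem State Value)) (p q : ℕ) (s s' s0 : State)
      (R : RvSys State Value),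
      BwdStep State Value
        (RvComp.proc (RvItem.spawn s q :: h) p s' ∅ ::ₘ RvComp.proc [] q s0 ∅ ::ₘ R)
        (RvComp.proc h p s ∅ ::ₘ R)
  | check : ∀ (h : List (RvItem State Value)) (p τ : ℕ) (s s' : State)
      (R : RvSys State Value),
      BwdStep State Value
        (RvComp.proc (RvItem.check τ s :: h) p s' ∅ ::ₘ R)
        (RvComp.proc h p s ∅ ::ₘ R)

/-- The uncontrolled reversible semantics ⇌ = ⇀ ∪ ↽. -/
def RevStep (State Value : Type) (L : Lang State Value)
    (S S' : RvSys State Value) : Prop :=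
  FwdStep State Value L S S' ∨ BwdStep State Value S S'

/-- Initial/reachable systems of the reversible semantics. -/
def ReachableRv (State Value : Type) (L : Lang State Value) (S : RvSys State Value) : Prop :=
  ∃ p s, Relation.ReflTransGen (RevStep State Value L)
    ({RvComp.proc ([] : List (RvItem State Value)) p s ∅} : RvSys State Value) S

/-- The controlled backward semantics ⟲ (Figure 15).  A configuration is in
rollback mode iff its request set φ is nonempty (structural equivalence SC);
the determinizing convention is encoded in the side conditions of
spawn2 (Spawn1 not applicable) and send2 (Send1 not applicable). -/
inductive CBStep (State Value : Type) (L : Lang State Value) :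
    RvSys State Value → RvSys State Value → Prop where
  | seq : ∀ (h : List (RvItem State Value)) (p : ℕ) (s s' : State) (φ : Finset Req)
      (R : RvSys State Value),
      φ ≠ ∅ →
      CBStep State Value L
        (RvComp.proc (RvItem.seq s' :: h) p s φ ::ₘ R)
        (RvComp.proc h p s' φ ::ₘ R)
  | check : ∀ (h : List (RvItem State Value)) (p τ : ℕ) (s s' : State) (φ : Finset Req)
      (R : RvSys State Value),
      φ ≠ ∅ →
      CBStep State Value L
        (RvComp.proc (RvItem.check τ s' :: h) p s φ ::ₘ R)
        (RvComp.proc h p s' (φ.erase (Req.chk τ)) ::ₘ R)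
  | sp : ∀ (p : ℕ) (s : State) (φ : Finset Req) (R : RvSys State Value),
      Req.sp ∈ φ →
      CBStep State Value L
        (RvComp.proc [] p s φ ::ₘ R)
        (RvComp.proc [] p s (φ.erase Req.sp) ::ₘ R)
  | recv : ∀ (h : List (RvItem State Value)) (p q ℓ : ℕ) (v : Value) (s s' : State)
      (φ : Finset Req) (R : RvSys State Value),
      φ ≠ ∅ →
      CBStep State Value L
        (RvComp.proc (RvItem.recM s' q ℓ v :: h) p s φ ::ₘ R)
        (RvComp.msg q p ℓ v ::ₘ RvComp.proc h p s' (φ.erase (Req.tag ℓ)) ::ₘ R)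
  | spawn1 : ∀ (h : List (RvItem State Value)) (p q : ℕ) (s s'' s' : State)
      (φ : Finset Req) (R : RvSys State Value),
      φ ≠ ∅ →
      CBStep State Value L
        (RvComp.proc (RvItem.spawn s'' q :: h) p s φ ::ₘ RvComp.proc [] q s' ∅ ::ₘ R)
        (RvComp.proc h p s'' φ ::ₘ R)
  | spawn2 : ∀ (h h' : List (RvItem State Value)) (p q τ : ℕ) (s s'' s' : State)
      (φ φ' : Finset Req) (R : RvSys State Value),
      φ ≠ ∅ →
      ¬ (h' = [] ∧ φ' = ∅) →
      CBStep State Value L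
        (RvComp.proc (RvItem.spawn s'' q :: h) p s φ ::ₘ RvComp.proc h' q s' φ' ::ₘ R)
        (RvComp.proc (RvItem.spawn s'' q :: h) p s φ ::ₘ
          RvComp.proc h' q s' (insert (Req.chk τ) (insert Req.sp φ')) ::ₘ R)
  | send1 : ∀ (h : List (RvItem State Value)) (p q ℓ : ℕ) (v : Value) (s s'' : State)
      (φ : Finset Req) (R : RvSys State Value),
      φ ≠ ∅ →
      CBStep State Value L
        (RvComp.proc (RvItem.send s'' q ℓ :: h) p s φ ::ₘ RvComp.msg p q ℓ v ::ₘ R)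
        (RvComp.proc h p s'' φ ::ₘ R)
  | send2 : ∀ (h h' : List (RvItem State Value)) (p q ℓ τ : ℕ) (s s'' s' : State)
      (φ φ' : Finset Req) (R : RvSys State Value),
      φ ≠ ∅ →
      (∀ v, RvComp.msg p q ℓ v ∉ R) →
      CBStep State Value L
        (RvComp.proc (RvItem.send s'' q ℓ :: h) p s φ ::ₘ RvComp.proc h' q s' φ' ::ₘ R)
        (RvComp.proc (RvItem.send s'' q ℓ :: h) p s φ ::ₘ
          RvComp.proc h' q s' (insert (Req.chk τ) (insert (Req.tag ℓ) φ')) ::ₘ R)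

/-- rolldel: remove all ongoing rollback annotations. -/
def rolldelComp (State Value : Type) : RvComp State Value → RvComp State Value
  | RvComp.proc h p s _ => RvComp.proc h p s ∅
  | RvComp.msg p q ℓ v => RvComp.msg p q ℓ v

def rolldel (State Value : Type) (S : RvSys State Value) : RvSys State Value :=
  S.map (rolldelComp State Value)

/-! ## The equivalence ≈ between the two semantics -/

/-- Normalized history items, common target of ⌊·⌋ and ⌈·⌉. -/
inductive NItem (State Value : Type) : Type where
  | send (q ℓ : ℕ)
  | recM (q ℓ : ℕ) (v : Value)
  | spawn (q : ℕ)
  | check (τ : ℕ) (s : Option State)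

/-- Normalized components. -/
inductive NComp (State Value : Type) : Type where
  | proc (h : List (NItem State Value)) (p : ℕ) (s : Option State)
  | msg (p q ℓ : ℕ) (v : Value)

/-- History normalization of ⌊·⌋: drop delayed checkpoints and the
checkpoint sets of rec items. -/
def normHist (State Value : Type) : Hist State Value → List (NItem State Value)
  | [] => []
  | HItem.check τ s :: Δ => NItem.check τ s :: normHist State Value Δ
  | HItem.dcheck _ _ :: Δ => normHist State Value Δ
  | HItem.send q ℓ :: Δ => NItem.send q ℓ :: normHist State Value Δ
  | HItem.recM _ q ℓ v :: Δ => NItem.recM q ℓ v :: normHist State Value Δ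
  | HItem.spawn q :: Δ => NItem.spawn q :: normHist State Value Δ

/-- ⌊·⌋: erase system notifications, checkpoint sets of messages,
rollback annotations, and normalize histories. -/
def floorComp (State Value : Type) : RComp State Value → Option (NComp State Value)
  | RComp.proc Δ p s _ => some (NComp.proc (normHist State Value Δ) p s)
  | RComp.msg _ p q ℓ v => some (NComp.msg p q ℓ v)
  | RComp.notif _ _ _ => none

def floorSys (State Value : Type) (S : RSys State Value) : Multiset (NComp State Value) :=
  Multiset.filterMap (floorComp State Value) S

/-- History normalization of ⌈·⌉: drop seq items and the saved states of
send, rec and spawn items. -/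
def normRvHist (State Value : Type) : List (RvItem State Value) → List (NItem State Value)
  | [] => []
  | RvItem.seq _ :: h => normRvHist State Value h
  | RvItem.send _ q ℓ :: h => NItem.send q ℓ :: normRvHist State Value h
  | RvItem.recM _ q ℓ v :: h => NItem.recM q ℓ v :: normRvHist State Value h
  | RvItem.spawn _ q :: h => NItem.spawn q :: normRvHist State Value h
  | RvItem.check τ s :: h => NItem.check τ (some s) :: normRvHist State Value h

/-- ⌈·⌉. -/
def ceilComp (State Value : Type) : RvComp State Value → NComp State Value
  | RvComp.proc h p s _ => NComp.proc (normRvHist State Value h) p (some s)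
  | RvComp.msg p q ℓ v => NComp.msg p q ℓ v

def ceilSys (State Value : Type) (S : RvSys State Value) : Multiset (NComp State Value) :=
  S.map (ceilComp State Value)

/-- The equivalence ≈ : S_rr ≈ S_r iff ⌊S_rr⌋ = ⌈S_r⌉. -/
def equivSys (State Value : Type) (S : RSys State Value) (T : RvSys State Value) : Prop :=
  floorSys State Value S = ceilSys State Value T

end RB

namespace RB

section Projection

variable {State Value : Type}

@[simp]
lemma staSys_cons_proc (Δ : Hist State Value) (p : ℕ) (s : Option State) (a : RAnn)
    (R : RSys State Value) :
    staSys State Value (RComp.proc Δ p s a ::ₘ R) = SComp.proc p s ::ₘ staSys State Value R :=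
  Multiset.filterMap_cons_some _ _ _ rfl

@[simp]
lemma staSys_cons_msg (C : Finset ℕ) (p q ℓ : ℕ) (v : Value) (R : RSys State Value) :
    staSys State Value (RComp.msg C p q ℓ v ::ₘ R) = SComp.msg p q v ::ₘ staSys State Value R :=
  Multiset.filterMap_cons_some _ _ _ rfl

lemma pidUsedR_of_pidUsedS_staSys {x : ℕ} {S : RSys State Value}
    (h : pidUsedS State Value x (staSys State Value S)) : pidUsedR State Value x S := by
  obtain ⟨c', hc', hx⟩ := h
  obtain ⟨c, hc, hsta⟩ := (Multiset.mem_filterMap _ _).mp hc'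
  refine ⟨c, hc, ?_⟩
  cases c with
  | proc => cases hsta; exact Or.inl hx
  | msg => cases hsta; exact hx
  | notif => cases hsta

theorem SStep.staSys_of_RStepL {L : Lang State Value} {l : RLabel} {S S' : RSys State Value}
    (hl : isCoreFwdLab l) (hs : RStepL State Value L l S S') :
    SStep State Value L (staSys State Value S) (staSys State Value S') := by
  rcases hl with rfl | rfl | rfl | rfl <;> cases hs <;>
    simp only [staSys_cons_proc, staSys_cons_msg]
  case seq _ p s s' _ hstep => exact .seq p s s' _ hstep
  case send _ p p' _ v s s' _ hstep _ => exact .send p p' v s s' _ hstep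
  case recv _ _ p q _ v s s' _ hstep => exact .recv p q v s s' _ hstep
  case spawn _ p p' s s0 s' _ hstep hfresh =>
    refine .spawn p p' s s0 s' _ hstep fun hused => hfresh ?_
    exact pidUsedR_of_pidUsedS_staSys (by rwa [staSys_cons_proc])

end Projection

theorem sta_of_forward_derivation_general
    (State Value : Type) (L : Lang State Value) (d : Deriv State Value L)
    (hfwd : ∀ i, i < d.len → isCoreFwdLab (d.lab i)) :
    ∀ i, i < d.len →
      SStep State Value L (staSys State Value (d.sys i)) (staSys State Value (d.sys (i + 1))) :=
  fun i hi => SStep.staSys_of_RStepL (hfwd i hi) (d.step i hi)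

/-- **Theorem 1 (conservative projection).**
Let `d` be a well-defined derivation under the rollback recovery semantics
in which only the forward rules Seq, Send, Receive, Spawn (and Par, which is
built into the rules) are applied — in particular, no checkpoint creation,
commit or rollback occurs.  Then the projection `sta(d)` — obtained by
erasing histories from process configurations and erasing
checkpoint-identifier sets and message tags from messages — is a derivation
under the standard semantics: every step of `d` projects to a step. -/
theorem sta_of_forward_derivation
    (State Value : Type) (L : Lang State Value) (d : Deriv State Value L)
    (hwd : WellDefined State Value L d)
    (hfwd : ∀ i, i < d.len → isCoreFwdLab (d.lab i)) :
    ∀ i, i < d.len →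
      SStep State Value L (staSys State Value (d.sys i)) (staSys State Value (d.sys (i + 1))) :=
  sta_of_forward_derivation_general State Value L d hfwd

end RB
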